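/- Let (X,d) be a complete metric space and define d_0^0 = d and d_0^{n+1} = (d_0^n)_0. If d_0^n = d_0^{n+1} for some n ∈ ℕ, then d_0^m = d̄ for all m ≥ n. -/

import Mathlib

/-!
Every iterate `d_0^m` is bounded by `d̄`: a path of finite length splits into finitely many pieces
of variation at most `ε`, so its subdivision points form an `ε`-chain for `d_0^(m-1) ≤ d̄` whose
length is at most the length of the path.

Conversely let `ρ = d_0^n` with `ρ_0 = ρ`. Cutting a nearly optimal fine `ρ`-chain from `x` to `y`
where its length reaches one half gives approximate `ρ`-midpoints. Inserting midpoints with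
errors `δ 4^(-k)` at level `k` yields a dyadic net whose neighbours at level `k` are
`(ρ(p,q) + δ) 2^(-k)`-close for `ρ`, hence for `d ≤ ρ`. By completeness of `d` the net converges
to a `d`-Lipschitz path from `p` to `q` of length at most `ρ(p,q) + δ`, so `d̄ ≤ ρ`. Since the
iterates are constant from `n` on, `d_0^m = d_0^n = d̄` for `m ≥ n`.
-/

open Filter Set
open scoped ENNReal

variable {X : Type*}

/-- The length of the chain `x 0, x 1, …, x n` with respect to the distance `ρ`. -/
noncomputable def chainLengthOf (ρ : X → X → ℝ≥0∞) (x : ℕ → X) (n : ℕ) : ℝ≥0∞ :=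
  ∑ k ∈ Finset.range n, ρ (x k) (x (k + 1))

/-- `x 0, …, x n` is an `ε`-chain from `p` to `q` with respect to `ρ`. -/
def IsChainOf (ρ : X → X → ℝ≥0∞) (ε : ℝ≥0∞) (p q : X) (x : ℕ → X) (n : ℕ) : Prop :=
  x 0 = p ∧ x n = q ∧ ∀ k < n, ρ (x k) (x (k + 1)) ≤ ε

/-- `d_ε`: the infimum of lengths of `ε`-chains joining `p` to `q`. -/
noncomputable def chainDistOf (ρ : X → X → ℝ≥0∞) (ε : ℝ≥0∞) (p q : X) : ℝ≥0∞ :=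
  ⨅ (n : ℕ) (x : ℕ → X) (_ : IsChainOf ρ ε p q x n), chainLengthOf ρ x n

/-- `d_0 = sup_{ε > 0} d_ε`. -/
noncomputable def chainMetricOf (ρ : X → X → ℝ≥0∞) (p q : X) : ℝ≥0∞ :=
  ⨆ (ε : ℝ≥0∞) (_ : 0 < ε), chainDistOf ρ ε p q

/-- `d_ε` for a metric space, with `ρ = edist`. -/
noncomputable def chainDist [PseudoEMetricSpace X] (ε : ℝ≥0∞) (p q : X) : ℝ≥0∞ :=
  chainDistOf (fun a b => edist a b) ε p q

/-- `d_0` for a metric space, with `ρ = edist`. -/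
noncomputable def chainMetric [PseudoEMetricSpace X] (p q : X) : ℝ≥0∞ :=
  chainMetricOf (fun a b => edist a b) p q

/-- The length of a path `γ : [0,1] → X` with respect to `ρ`:
the supremum over partitions `0 = t 0 ≤ t 1 ≤ … ≤ t n = 1` of the partition sums. -/
noncomputable def pathLengthOf (ρ : X → X → ℝ≥0∞) (γ : ℝ → X) : ℝ≥0∞ :=
  ⨆ (n : ℕ) (t : ℕ → ℝ) (_ : t 0 = 0 ∧ t n = 1 ∧ Monotone t),
    ∑ k ∈ Finset.range n, ρ (γ (t k)) (γ (t (k + 1)))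

noncomputable def pathLength [PseudoEMetricSpace X] (γ : ℝ → X) : ℝ≥0∞ :=
  pathLengthOf (fun a b => edist a b) γ

/-- Continuity of a path `γ` on `[0,1]` with respect to the distance `ρ`. -/
def ContinuousWrt (ρ : X → X → ℝ≥0∞) (γ : ℝ → X) : Prop :=
  ∀ t ∈ Icc (0 : ℝ) 1,
    Tendsto (fun s => ρ (γ s) (γ t)) (nhdsWithin t (Icc (0 : ℝ) 1)) (nhds 0)

/-- The induced length metric with respect to `ρ`: the infimum of `ρ`-lengths of
`ρ`-continuous paths joining `p` to `q`. -/
noncomputable def lengthMetricOf (ρ : X → X → ℝ≥0∞) (p q : X) : ℝ≥0∞ :=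
  ⨅ (γ : ℝ → X) (_ : ContinuousWrt ρ γ ∧ γ 0 = p ∧ γ 1 = q), pathLengthOf ρ γ

/-- The induced length metric `d̄` of a metric space. -/
noncomputable def lengthMetric [PseudoEMetricSpace X] (p q : X) : ℝ≥0∞ :=
  lengthMetricOf (fun a b => edist a b) p q

/-- The iterates of the `d_0` construction: `d_0^0 = d` and `d_0^{n+1} = (d_0^n)_0`. -/
noncomputable def iterChainMetric {X : Type*} [PseudoEMetricSpace X] : ℕ → X → X → ℝ≥0∞
  | 0 => fun p q => edist p q
  | n + 1 => chainMetricOf (iterChainMetric n)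

open scoped NNReal Topology

section Chains

variable {ρ σ : X → X → ℝ≥0∞} {ε : ℝ≥0∞} {p q r : X} {x y : ℕ → X} {n m : ℕ}

theorem le_sum_Ico_of_triangle (hrefl : ∀ a, ρ a a = 0) (htri : ∀ a b c, ρ a c ≤ ρ a b + ρ b c)
    (x : ℕ → X) {i j : ℕ} (hij : i ≤ j) :
    ρ (x i) (x j) ≤ ∑ k ∈ Finset.Ico i j, ρ (x k) (x (k + 1)) := by
  induction j, hij using Nat.le_induction with
  | base => simp [hrefl]
  | succ j hij ih =>
    rw [Finset.sum_Ico_succ_top hij]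
    exact (htri _ _ _).trans (add_le_add ih le_rfl)

theorem le_chainLengthOf (hrefl : ∀ a, ρ a a = 0) (htri : ∀ a b c, ρ a c ≤ ρ a b + ρ b c)
    (x : ℕ → X) (n : ℕ) : ρ (x 0) (x n) ≤ chainLengthOf ρ x n := by
  rw [chainLengthOf, Finset.range_eq_Ico]
  exact le_sum_Ico_of_triangle hrefl htri x n.zero_le

theorem chainDistOf_le_chainLengthOf (hx : IsChainOf ρ ε p q x n) :
    chainDistOf ρ ε p q ≤ chainLengthOf ρ x n :=
  (iInf_le _ n).trans <| (iInf_le _ x).trans <| iInf_le _ hx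

theorem exists_isChainOf_of_chainDistOf_lt {c : ℝ≥0∞} (h : chainDistOf ρ ε p q < c) :
    ∃ n x, IsChainOf ρ ε p q x n ∧ chainLengthOf ρ x n < c := by
  simpa only [chainDistOf, iInf_lt_iff, exists_prop] using h

theorem chainDistOf_le_chainMetricOf (hε : 0 < ε) :
    chainDistOf ρ ε p q ≤ chainMetricOf ρ p q :=
  le_iSup₂ (f := fun ε (_ : 0 < ε) => chainDistOf ρ ε p q) ε hε

theorem chainMetricOf_le_iff {c : ℝ≥0∞} :
    chainMetricOf ρ p q ≤ c ↔ ∀ ε, 0 < ε → chainDistOf ρ ε p q ≤ c :=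
  iSup₂_le_iff

theorem chainMetricOf_self (ρ : X → X → ℝ≥0∞) (p : X) : chainMetricOf ρ p p = 0 := by
  refine nonpos_iff_eq_zero.1 (chainMetricOf_le_iff.2 fun ε _ => ?_)
  have hchain : IsChainOf ρ ε p p (fun _ => p) 0 := ⟨rfl, rfl, by simp⟩
  simpa [chainLengthOf] using chainDistOf_le_chainLengthOf hchain

theorem le_chainDistOf (hσρ : ∀ a b, σ a b ≤ ρ a b) (hrefl : ∀ a, σ a a = 0)
    (htri : ∀ a b c, σ a c ≤ σ a b + σ b c) (ε : ℝ≥0∞) (p q : X) :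
    σ p q ≤ chainDistOf ρ ε p q := by
  refine le_iInf fun n => le_iInf fun x => le_iInf fun hx => ?_
  calc σ p q = σ (x 0) (x n) := by rw [hx.1, hx.2.1]
    _ ≤ chainLengthOf σ x n := le_chainLengthOf hrefl htri x n
    _ ≤ chainLengthOf ρ x n := Finset.sum_le_sum fun k _ => hσρ _ _

def chainAppend (x y : ℕ → X) (n k : ℕ) : X :=
  if k ≤ n then x k else y (k - n)

theorem chainAppend_of_le {k : ℕ} (hk : k ≤ n) : chainAppend x y n k = x k :=
  if_pos hk

theorem chainAppend_add (hxy : x n = y 0) (k : ℕ) : chainAppend x y n (n + k) = y k := by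
  unfold chainAppend
  split_ifs with hk
  · obtain rfl : k = 0 := by omega
    simpa using hxy
  · rw [Nat.add_sub_cancel_left]

theorem chainLengthOf_chainAppend (hxy : x n = y 0) :
    chainLengthOf ρ (chainAppend x y n) (n + m) = chainLengthOf ρ x n + chainLengthOf ρ y m := by
  unfold chainLengthOf
  rw [Finset.sum_range_add]
  congr 1
  · refine Finset.sum_congr rfl fun k hk => ?_
    have hk := Finset.mem_range.1 hk
    rw [chainAppend_of_le hk.le, chainAppend_of_le hk]
  · refine Finset.sum_congr rfl fun k _ => ?_
    rw [chainAppend_add hxy, add_assoc, chainAppend_add hxy]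

theorem IsChainOf.append (hx : IsChainOf ρ ε p q x n) (hy : IsChainOf ρ ε q r y m) :
    IsChainOf ρ ε p r (chainAppend x y n) (n + m) := by
  have hxy : x n = y 0 := hx.2.1.trans hy.1.symm
  refine ⟨(chainAppend_of_le n.zero_le).trans hx.1, (chainAppend_add hxy m).trans hy.2.1,
    fun k hk => ?_⟩
  rcases lt_or_ge k n with hkn | hkn
  · rw [chainAppend_of_le hkn.le, chainAppend_of_le hkn]
    exact hx.2.2 k hkn
  · obtain ⟨i, rfl⟩ := Nat.exists_eq_add_of_le hkn
    rw [chainAppend_add hxy, add_assoc, chainAppend_add hxy]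
    exact hy.2.2 i (by omega)

theorem chainDistOf_triangle (ρ : X → X → ℝ≥0∞) (ε : ℝ≥0∞) (p q r : X) :
    chainDistOf ρ ε p r ≤ chainDistOf ρ ε p q + chainDistOf ρ ε q r := by
  simp only [chainDistOf, ENNReal.iInf_add, ENNReal.add_iInf]
  refine le_iInf₂ fun m y => le_iInf₂ fun hy n => le_iInf₂ fun x hx => ?_
  rw [← chainLengthOf_chainAppend (hx.2.1.trans hy.1.symm)]
  exact chainDistOf_le_chainLengthOf (hx.append hy)

theorem chainMetricOf_triangle (ρ : X → X → ℝ≥0∞) (p q r : X) :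
    chainMetricOf ρ p r ≤ chainMetricOf ρ p q + chainMetricOf ρ q r :=
  chainMetricOf_le_iff.2 fun _ hε => (chainDistOf_triangle ρ _ p q r).trans <|
    add_le_add (chainDistOf_le_chainMetricOf hε) (chainDistOf_le_chainMetricOf hε)

end Chains

section Iterates

variable [PseudoEMetricSpace X]

theorem iterChainMetric_self (n : ℕ) (p : X) : iterChainMetric n p p = 0 := by
  cases n with
  | zero => exact edist_self p
  | succ n => exact chainMetricOf_self _ p

theorem iterChainMetric_triangle (n : ℕ) (p q r : X) :
    iterChainMetric n p r ≤ iterChainMetric n p q + iterChainMetric n q r := by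
  cases n with
  | zero => exact edist_triangle p q r
  | succ n => exact chainMetricOf_triangle _ p q r

theorem edist_le_iterChainMetric (n : ℕ) (p q : X) : edist p q ≤ iterChainMetric n p q := by
  induction n generalizing p q with
  | zero => exact le_rfl
  | succ n ih =>
    exact (le_chainDistOf ih edist_self edist_triangle 1 p q).trans
      (chainDistOf_le_chainMetricOf one_pos)

theorem iterChainMetric_eq_of_le {n : ℕ}
    (h : ∀ p q : X, iterChainMetric n p q = iterChainMetric (n + 1) p q) {m : ℕ} (hm : n ≤ m) :
    iterChainMetric m = (iterChainMetric n : X → X → ℝ≥0∞) := by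
  induction m, hm using Nat.le_induction with
  | base => rfl
  | succ m _ ih =>
    change chainMetricOf (iterChainMetric m) = _
    rw [ih]
    exact funext₂ fun p q => (h p q).symm

end Iterates

section Variation

variable {α E : Type*} [LinearOrder α] [PseudoEMetricSpace E]

theorem variationOnFromTo_eq_sub (f : α → E) (s : Set α) (a b : α) :
    variationOnFromTo f s a b =
      (eVariationOn f (s ∩ Icc a b)).toReal - (eVariationOn f (s ∩ Icc b a)).toReal := by
  rcases le_total a b with hab | hba
  · rw [variationOnFromTo.eq_of_le f s hab, eVariationOn.subsingleton f
      ((subsingleton_Icc_of_ge hab).anti inter_subset_right), ENNReal.toReal_zero, sub_zero]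
  · rw [variationOnFromTo.eq_of_ge f s hba, eVariationOn.subsingleton f
      ((subsingleton_Icc_of_ge hba).anti inter_subset_right), ENNReal.toReal_zero, zero_sub]

theorem BoundedVariationOn.continuousOn_variationOnFromTo [TopologicalSpace α] [OrderTopology α]
    {f : α → E} {s : Set α} (hbv : BoundedVariationOn f s) (hf : ContinuousOn f s) (a : α)
    (ha : a ∈ s) : ContinuousOn (variationOnFromTo f s a) s := by
  intro x hx
  have hright := hbv.tendsto_eVariationOn_Icc_zero_right x ((hf x hx).mono inter_subset_left)
  have hleft := hbv.tendsto_eVariationOn_Icc_zero_left ((hf x hx).mono inter_subset_left)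
  have hlim := ((ENNReal.tendsto_toReal ENNReal.zero_ne_top).comp hright).sub
    ((ENNReal.tendsto_toReal ENNReal.zero_ne_top).comp hleft)
  rw [ENNReal.toReal_zero, sub_zero] at hlim
  have hsum := (tendsto_const_nhds (x := variationOnFromTo f s a x)).add hlim
  rw [add_zero] at hsum
  refine hsum.congr' ?_
  filter_upwards [self_mem_nhdsWithin] with y hy
  rw [Function.comp_def, Function.comp_def, ← variationOnFromTo_eq_sub,
    variationOnFromTo.add hbv.locallyBoundedVariationOn ha hx hy]

end Variation

section PathLength

variable [PseudoEMetricSpace X]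

theorem continuousWrt_edist_iff {γ : ℝ → X} :
    ContinuousWrt (fun a b => edist a b) γ ↔ ContinuousOn γ (Icc 0 1) :=
  forall₂_congr fun _ _ => tendsto_iff_edist_tendsto_0.symm

theorem pathLength_eq_eVariationOn (γ : ℝ → X) : pathLength γ = eVariationOn γ (Icc 0 1) := by
  apply le_antisymm
  · refine iSup₂_le fun n t => iSup_le fun ⟨h0, hn, ht⟩ => ?_
    have hmem : ∀ i ∈ Icc 0 n, t i ∈ Icc (0 : ℝ) 1 := fun i hi => ⟨h0 ▸ ht hi.1, hn ▸ ht hi.2⟩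
    rw [Finset.range_eq_Ico, Finset.sum_congr rfl fun i _ => edist_comm (γ (t i)) (γ (t (i + 1)))]
    exact eVariationOn.sum_le_of_monotoneOn_Icc (ht.monotoneOn _) hmem
  · refine iSup_le fun ⟨n, u, hu, hmem⟩ => ?_
    -- pad `u` with the endpoints `0` and `1`
    set t : ℕ → ℝ := fun i => if i = 0 then 0 else if i ≤ n + 1 then u (i - 1) else 1
    have ht : Monotone t := by
      refine monotone_nat_of_le_succ fun i => ?_
      simp only [t]
      split_ifs <;> first
        | contradiction | (exfalso; omega) | exact le_rfl | exact zero_le_one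
        | exact (hmem _).1 | exact (hmem _).2 | exact hu (by omega)
    refine le_trans ?_ (le_iSup₂_of_le (n + 1 + 1) t (le_iSup_of_le ⟨rfl, by simp [t], ht⟩ le_rfl))
    rw [Finset.sum_range_succ', Finset.sum_range_succ, add_assoc]
    refine le_add_right (le_of_eq (Finset.sum_congr rfl fun i hi => ?_))
    have hi := Finset.mem_range.1 hi
    simp only [t, if_neg (Nat.succ_ne_zero _), if_pos (by omega : i + 1 ≤ n + 1),
      if_pos (by omega : i + 1 + 1 ≤ n + 1), Nat.add_sub_cancel, edist_comm]

theorem edist_le_lengthMetric (p q : X) : edist p q ≤ lengthMetric p q := by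
  refine le_iInf₂ fun γ ⟨_, h0, h1⟩ => ?_
  rw [← h0, ← h1]
  exact (eVariationOn.edist_le γ (left_mem_Icc.2 zero_le_one) (right_mem_Icc.2 zero_le_one)).trans
    (pathLength_eq_eVariationOn γ).ge

theorem lengthMetric_le_eVariationOn {γ : ℝ → X} {a b : ℝ} (hab : a ≤ b)
    (hγ : ContinuousOn γ (Icc a b)) : lengthMetric (γ a) (γ b) ≤ eVariationOn γ (Icc a b) := by
  set φ : ℝ → ℝ := fun u => a + u * (b - a)
  have hφ : MonotoneOn φ (Icc 0 1) := fun u _ v _ huv => by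
    simp only [φ]; gcongr
  have hmaps : MapsTo φ (Icc 0 1) (Icc a b) := fun u hu =>
    ⟨by nlinarith [hu.1], by nlinarith [hu.2]⟩
  have hcont : ContinuousOn (γ ∘ φ) (Icc 0 1) := hγ.comp (by fun_prop) hmaps
  calc lengthMetric (γ a) (γ b) ≤ pathLength (γ ∘ φ) :=
        iInf₂_le (γ ∘ φ) ⟨continuousWrt_edist_iff.2 hcont, by simp [φ], by simp [φ]⟩
    _ = eVariationOn (γ ∘ φ) (Icc 0 1) := pathLength_eq_eVariationOn _
    _ ≤ eVariationOn γ (Icc a b) := eVariationOn.comp_le_of_monotoneOn γ φ hφ hmaps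

theorem exists_eVariationOn_Icc_div_le {γ : ℝ → X} (hγ : ContinuousOn γ (Icc 0 1))
    (hbv : BoundedVariationOn γ (Icc 0 1)) {ε : ℝ≥0∞} (hε : 0 < ε) :
    ∃ N : ℕ, 0 < N ∧ ∀ i < N, eVariationOn γ (Icc (i / N : ℝ) ((i + 1) / N)) ≤ ε := by
  obtain ⟨η, hη₀, hη, hηε⟩ := ENNReal.lt_iff_exists_real_btwn.1 hε
  -- the variation from `0` is continuous on the compact `[0, 1]`, hence uniformly continuous
  obtain ⟨δ, hδ, hV⟩ := Metric.uniformContinuousOn_iff_le.1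
    (isCompact_Icc.uniformContinuousOn_of_continuous
      (hbv.continuousOn_variationOnFromTo hγ 0 (left_mem_Icc.2 zero_le_one)))
    η (ENNReal.ofReal_pos.1 hη)
  obtain ⟨n, hn⟩ := exists_nat_one_div_lt hδ
  refine ⟨n + 1, n.succ_pos, fun i hi => ?_⟩
  have hN : (0 : ℝ) < (n + 1 : ℕ) := by positivity
  have hi : (i : ℝ) + 1 ≤ (n + 1 : ℕ) := by exact_mod_cast hi
  have ha : (i / (n + 1 : ℕ) : ℝ) ∈ Icc (0 : ℝ) 1 :=
    ⟨by positivity, (div_le_one hN).2 (by linarith)⟩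
  have hb : ((i + 1) / (n + 1 : ℕ) : ℝ) ∈ Icc (0 : ℝ) 1 :=
    ⟨by positivity, (div_le_one hN).2 hi⟩
  have hab : (i / (n + 1 : ℕ) : ℝ) ≤ (i + 1) / (n + 1 : ℕ) := by gcongr; linarith
  have hdist : dist ((i + 1) / (n + 1 : ℕ) : ℝ) (i / (n + 1 : ℕ)) ≤ δ := by
    rw [Real.dist_eq, ← sub_div, add_sub_cancel_left, abs_of_pos (by positivity)]
    push_cast at hn ⊢
    exact hn.le
  have hpiece := (le_abs_self _).trans ((Real.dist_eq _ _).symm.trans_le (hV _ hb _ ha hdist))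
  rw [variationOnFromTo.sub_right hbv.locallyBoundedVariationOn (left_mem_Icc.2 zero_le_one) hb ha,
    variationOnFromTo.eq_of_le _ _ hab, inter_eq_right.2 (Icc_subset_Icc ha.1 hb.2)] at hpiece
  have hfin : eVariationOn γ (Icc (i / (n + 1 : ℕ) : ℝ) ((i + 1) / (n + 1 : ℕ))) ≠ ⊤ :=
    ne_top_of_le_ne_top hbv (eVariationOn.mono γ (Icc_subset_Icc ha.1 hb.2))
  exact ((ENNReal.le_ofReal_iff_toReal_le hfin hη₀).2 hpiece).trans hηε.le

end PathLength

section LowerBound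

variable [PseudoEMetricSpace X]

theorem chainMetricOf_le_lengthMetric {ρ : X → X → ℝ≥0∞}
    (hρ : ∀ p q, ρ p q ≤ lengthMetric p q) (p q : X) :
    chainMetricOf ρ p q ≤ lengthMetric p q := by
  refine chainMetricOf_le_iff.2 fun ε hε => le_iInf₂ fun γ ⟨hγ, h0, h1⟩ => ?_
  rw [continuousWrt_edist_iff] at hγ
  change chainDistOf ρ ε p q ≤ pathLength γ
  rw [pathLength_eq_eVariationOn]
  by_cases hbv : eVariationOn γ (Icc 0 1) = ⊤
  · exact hbv ▸ le_top
  obtain ⟨N, hN, hsmall⟩ := exists_eVariationOn_Icc_div_le hγ hbv hε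
  set t : ℕ → ℝ := fun i => i / N
  have ht : Monotone t := fun i j hij => by simp only [t]; gcongr
  have hpiece : ∀ i < N, ρ (γ (t i)) (γ (t (i + 1))) ≤ eVariationOn γ (Icc (t i) (t (i + 1))) := by
    intro i hi
    have hsub : Icc (t i) (t (i + 1)) ⊆ Icc 0 1 := by
      refine Icc_subset_Icc (by positivity) ((div_le_one (by positivity)).2 ?_)
      exact_mod_cast hi
    exact (hρ _ _).trans (lengthMetric_le_eVariationOn (ht i.le_succ) (hγ.mono hsub))
  have hchain : IsChainOf ρ ε p q (γ ∘ t) N := by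
    refine ⟨by simp [t, h0], by simp [t, hN.ne', h1], fun i hi => (hpiece i hi).trans ?_⟩
    simpa [t] using hsmall i hi
  calc chainDistOf ρ ε p q ≤ chainLengthOf ρ (γ ∘ t) N := chainDistOf_le_chainLengthOf hchain
    _ ≤ ∑ i ∈ Finset.range N, eVariationOn γ (Icc (t i) (t (i + 1))) :=
        Finset.sum_le_sum fun i hi => hpiece i (Finset.mem_range.1 hi)
    _ = eVariationOn γ (Icc 0 1) := by
        rw [eVariationOn.sum' γ ht]
        simp [t, hN.ne']

theorem iterChainMetric_le_lengthMetric (n : ℕ) (p q : X) :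
    iterChainMetric n p q ≤ lengthMetric p q := by
  induction n generalizing p q with
  | zero => exact edist_le_lengthMetric p q
  | succ n ih => exact chainMetricOf_le_lengthMetric ih p q

end LowerBound

section Midpoints

theorem exists_sum_range_le_half_and_sum_Ico_le {s : ℕ → ℝ≥0∞} {N : ℕ} {η : ℝ≥0∞}
    (hs : ∀ i < N, s i ≤ η) (hfin : ∑ i ∈ Finset.range N, s i ≠ ⊤) :
    ∃ j ≤ N, ∑ i ∈ Finset.range j, s i ≤ (∑ i ∈ Finset.range N, s i) / 2 ∧
      ∑ i ∈ Finset.Ico j N, s i ≤ (∑ i ∈ Finset.range N, s i) / 2 + η := by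
  classical
  set S := ∑ i ∈ Finset.range N, s i
  set j := Nat.findGreatest (fun j => ∑ i ∈ Finset.range j, s i ≤ S / 2) N
  have hjN : j ≤ N := Nat.findGreatest_le N
  refine ⟨j, hjN, Nat.findGreatest_spec (P := fun j => ∑ i ∈ Finset.range j, s i ≤ S / 2)
    N.zero_le (by simp), ?_⟩
  rcases hjN.eq_or_lt with hj | hj
  · simp [hj]
  have hnext : S / 2 < ∑ i ∈ Finset.range (j + 1), s i :=
    not_le.1 (Nat.findGreatest_is_greatest j.lt_succ_self hj)
  rw [Finset.sum_range_succ] at hnext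
  have hsplit : ∑ i ∈ Finset.range j, s i + ∑ i ∈ Finset.Ico j N, s i = S :=
    Finset.sum_range_add_sum_Ico s hjN
  have hhalf : S / 2 ≠ ⊤ := ENNReal.div_ne_top hfin two_ne_zero
  refine (ENNReal.add_le_add_iff_right hhalf).1 ?_
  calc ∑ i ∈ Finset.Ico j N, s i + S / 2
      ≤ ∑ i ∈ Finset.Ico j N, s i + (∑ i ∈ Finset.range j, s i + η) :=
        add_le_add le_rfl (hnext.le.trans (add_le_add le_rfl (hs j hj)))
    _ = S / 2 + η + S / 2 := by rw [add_right_comm (S / 2), ENNReal.add_halves, ← hsplit]; ring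

theorem exists_approx_midpoint {ρ : X → X → ℝ≥0∞} (hrefl : ∀ a, ρ a a = 0)
    (htri : ∀ a b c, ρ a c ≤ ρ a b + ρ b c) (hstab : ∀ a b, chainMetricOf ρ a b ≤ ρ a b)
    (x y : X) {η : ℝ≥0∞} (hη : 0 < η) :
    ∃ z, ρ x z ≤ ρ x y / 2 + η ∧ ρ z y ≤ ρ x y / 2 + η := by
  rcases eq_or_ne (ρ x y) ⊤ with htop | hfin
  · exact ⟨x, by simp [htop, ENNReal.top_div_of_ne_top]⟩
  have hη2 : 0 < η / 2 := ENNReal.half_pos hη.ne'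
  obtain ⟨N, c, hc, hlen⟩ := exists_isChainOf_of_chainDistOf_lt <|
    ((chainDistOf_le_chainMetricOf hη2).trans (hstab x y)).trans_lt
      (ENNReal.lt_add_right hfin hη.ne')
  obtain ⟨j, hjN, hhead, htail⟩ :=
    exists_sum_range_le_half_and_sum_Ico_le (s := fun i => ρ (c i) (c (i + 1))) hc.2.2 hlen.ne_top
  have hhalf : chainLengthOf ρ c N / 2 ≤ ρ x y / 2 + η / 2 := by
    rw [← ENNReal.add_div]
    exact ENNReal.div_le_div_right hlen.le 2
  refine ⟨c j, ?_, ?_⟩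
  · calc ρ x (c j) = ρ (c 0) (c j) := by rw [hc.1]
      _ ≤ ∑ i ∈ Finset.range j, ρ (c i) (c (i + 1)) := by
          rw [Finset.range_eq_Ico]; exact le_sum_Ico_of_triangle hrefl htri c j.zero_le
      _ ≤ ρ x y / 2 + η / 2 := hhead.trans hhalf
      _ ≤ ρ x y / 2 + η := add_le_add le_rfl ENNReal.half_le_self
  · calc ρ (c j) y = ρ (c j) (c N) := by rw [hc.2.1]
      _ ≤ ∑ i ∈ Finset.Ico j N, ρ (c i) (c (i + 1)) := le_sum_Ico_of_triangle hrefl htri c hjN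
      _ ≤ ρ x y / 2 + η / 2 + η / 2 := htail.trans (add_le_add hhalf le_rfl)
      _ = ρ x y / 2 + η := by rw [add_assoc, ENNReal.add_halves]

end Midpoints

section DyadicNet

def dyadicNet (mid : ℕ → X → X → X) (p q : X) : ℕ → ℕ → X
  | 0, j => if j = 0 then p else q
  | k + 1, j =>
    if j % 2 = 0 then dyadicNet mid p q k (j / 2)
    else mid k (dyadicNet mid p q k (j / 2)) (dyadicNet mid p q k (j / 2 + 1))

variable (mid : ℕ → X → X → X) (p q : X)

theorem dyadicNet_succ_two_mul (k j : ℕ) :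
    dyadicNet mid p q (k + 1) (2 * j) = dyadicNet mid p q k j := by
  simp [dyadicNet]

theorem dyadicNet_adjacent_le {ρ : X → X → ℝ≥0∞} (hrefl : ∀ a, ρ a a = 0) {δ : ℝ≥0∞}
    (hmid : ∀ k a b, ρ a (mid k a b) ≤ ρ a b / 2 + δ * 2⁻¹ ^ (2 * k + 2) ∧
      ρ (mid k a b) b ≤ ρ a b / 2 + δ * 2⁻¹ ^ (2 * k + 2)) (k j : ℕ) :
    ρ (dyadicNet mid p q k j) (dyadicNet mid p q k (j + 1)) ≤ (ρ p q + δ) * 2⁻¹ ^ k := by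
  -- the slack `δ * 2⁻¹ ^ (2 * k)` absorbs the errors of all later midpoints
  suffices h : ∀ k j, ρ (dyadicNet mid p q k j) (dyadicNet mid p q k (j + 1)) +
      δ * 2⁻¹ ^ (2 * k) ≤ (ρ p q + δ) * 2⁻¹ ^ k from le_of_add_le_left (h k j)
  intro k
  induction k with
  | zero =>
    intro j
    rcases j with _ | j <;> simp [dyadicNet, hrefl]
  | succ k ih =>
    intro j
    set a := dyadicNet mid p q k (j / 2)
    set b := dyadicNet mid p q k (j / 2 + 1)
    have hchild : ρ (dyadicNet mid p q (k + 1) j) (dyadicNet mid p q (k + 1) (j + 1)) ≤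
        ρ a b / 2 + δ * 2⁻¹ ^ (2 * k + 2) := by
      rcases Nat.mod_two_eq_zero_or_one j with hj | hj
      · have hj' : (j + 1) / 2 = j / 2 := by omega
        simpa [dyadicNet, hj, Nat.succ_mod_two_eq_one_iff.2 hj, hj'] using (hmid k a b).1
      · have hj' : (j + 1) / 2 = j / 2 + 1 := by omega
        simpa [dyadicNet, hj, Nat.succ_mod_two_eq_zero_iff.2 hj, hj'] using (hmid k a b).2
    have htwo : (2 : ℝ≥0∞) * 2⁻¹ = 1 := ENNReal.mul_inv_cancel two_ne_zero ENNReal.ofNat_ne_top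
    calc ρ (dyadicNet mid p q (k + 1) j) (dyadicNet mid p q (k + 1) (j + 1)) +
          δ * 2⁻¹ ^ (2 * (k + 1))
        ≤ ρ a b / 2 + δ * 2⁻¹ ^ (2 * k + 2) + δ * 2⁻¹ ^ (2 * k + 2) := by
          rw [mul_add_one]; exact add_le_add hchild le_rfl
      _ = (ρ a b + δ * 2⁻¹ ^ (2 * k)) * 2⁻¹ := by
          rw [div_eq_mul_inv]
          calc _ = ρ a b * 2⁻¹ + δ * 2⁻¹ ^ (2 * k) * 2⁻¹ * (2 * 2⁻¹) := by ring
            _ = _ := by rw [htwo, mul_one, add_mul]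
      _ ≤ (ρ p q + δ) * 2⁻¹ ^ k * 2⁻¹ := mul_le_mul_left (ih (j / 2)) _
      _ = (ρ p q + δ) * 2⁻¹ ^ (k + 1) := by rw [pow_succ, mul_assoc]

end DyadicNet

section DyadicPath

theorem Nat.floor_two_mul_eq_or (a : ℝ) : ⌊2 * a⌋₊ = 2 * ⌊a⌋₊ ∨ ⌊2 * a⌋₊ = 2 * ⌊a⌋₊ + 1 := by
  rcases lt_or_ge a 0 with ha | ha
  · simp [Nat.floor_of_nonpos ha.le, Nat.floor_of_nonpos (by linarith : 2 * a ≤ 0)]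
  have hlow : 2 * ⌊a⌋₊ ≤ ⌊2 * a⌋₊ :=
    Nat.le_floor (by push_cast; linarith [Nat.floor_le ha])
  have hup : ⌊2 * a⌋₊ < 2 * ⌊a⌋₊ + 2 :=
    (Nat.floor_lt (by positivity)).2 (by push_cast; linarith [Nat.lt_floor_add_one a])
  omega

theorem Nat.floor_sub_floor_le {a b : ℝ} (hab : a ≤ b) : (⌊b⌋₊ - ⌊a⌋₊ : ℝ) ≤ b - a + 1 := by
  rcases lt_or_ge b 0 with hb | hb
  · simp [Nat.floor_of_nonpos hb.le, Nat.floor_of_nonpos (hab.trans hb.le)]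
    linarith
  · linarith [Nat.floor_le hb, Nat.sub_one_lt_floor a]

variable {Y : Type*} {x : ℕ → ℕ → Y} {B : ℝ≥0}

theorem dist_dyadic_floor_succ_le [PseudoMetricSpace Y] (hx : ∀ k j, x (k + 1) (2 * j) = x k j)
    (hB : ∀ k j, dist (x k j) (x k (j + 1)) ≤ B / 2 ^ k) (t : ℝ) (k : ℕ) :
    dist (x k ⌊t * 2 ^ k⌋₊) (x (k + 1) ⌊t * 2 ^ (k + 1)⌋₊) ≤ B / 2 / 2 ^ k := by
  rw [show t * 2 ^ (k + 1) = 2 * (t * 2 ^ k) by ring]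
  rcases Nat.floor_two_mul_eq_or (t * 2 ^ k) with h | h <;> rw [h, ← hx k]
  · rw [dist_self]; positivity
  · exact (hB (k + 1) _).trans_eq (by ring)

theorem dist_dyadic_floor_le [PseudoMetricSpace Y]
    (hB : ∀ k j, dist (x k j) (x k (j + 1)) ≤ B / 2 ^ k) {s t : ℝ} (hst : s ≤ t) (k : ℕ) :
    dist (x k ⌊s * 2 ^ k⌋₊) (x k ⌊t * 2 ^ k⌋₊) ≤ B * (t - s) + B / 2 ^ k := by
  have hmono : ⌊s * 2 ^ k⌋₊ ≤ ⌊t * 2 ^ k⌋₊ := Nat.floor_le_floor (by gcongr)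
  calc dist (x k ⌊s * 2 ^ k⌋₊) (x k ⌊t * 2 ^ k⌋₊)
      ≤ ∑ _ ∈ Finset.Ico ⌊s * 2 ^ k⌋₊ ⌊t * 2 ^ k⌋₊, (B / 2 ^ k : ℝ) :=
        dist_le_Ico_sum_of_dist_le hmono fun _ _ => hB k _
    _ = (⌊t * 2 ^ k⌋₊ - ⌊s * 2 ^ k⌋₊ : ℝ) * (B / 2 ^ k) := by
        rw [Finset.sum_const, Nat.card_Ico, nsmul_eq_mul, Nat.cast_sub hmono]
    _ ≤ (t * 2 ^ k - s * 2 ^ k + 1) * (B / 2 ^ k) := by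
        gcongr; exact Nat.floor_sub_floor_le (by gcongr)
    _ = B * (t - s) + B / 2 ^ k := by field_simp

theorem exists_lipschitzWith_of_dyadic [MetricSpace Y] [CompleteSpace Y]
    (hx : ∀ k j, x (k + 1) (2 * j) = x k j) (hB : ∀ k j, dist (x k j) (x k (j + 1)) ≤ B / 2 ^ k) :
    ∃ g : ℝ → Y, LipschitzWith B g ∧ g 0 = x 0 0 ∧ g 1 = x 0 1 := by
  have hcoarse : ∀ k j, x k (2 ^ k * j) = x 0 j := by
    intro k j
    induction k with
    | zero => simp
    | succ k ih => rw [pow_succ', mul_assoc, hx, ih]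
  set f : ℝ → ℕ → Y := fun t k => x k ⌊t * 2 ^ k⌋₊
  have hstep : ∀ t k, dist (f t k) (f t (k + 1)) ≤ B / 2 / 2 ^ k :=
    dist_dyadic_floor_succ_le hx hB
  choose g hg using fun t => cauchySeq_tendsto_of_complete (cauchySeq_of_le_geometric_two (hstep t))
  have htail : ∀ t k, dist (f t k) (g t) ≤ B / 2 ^ k := fun t =>
    dist_le_of_le_geometric_two_of_tendsto (hstep t) (hg t)
  have hlip : ∀ s t, s ≤ t → dist (g s) (g t) ≤ B * (t - s) := by
    intro s t hst
    have hlim : Tendsto (fun k : ℕ => B * (t - s) + 3 * (B / 2 ^ k)) atTop (𝓝 (B * (t - s))) := by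
      simpa using tendsto_const_nhds.add ((tendsto_const_nhds.div_atTop
        (tendsto_pow_atTop_atTop_of_one_lt (one_lt_two : (1 : ℝ) < 2))).const_mul 3)
    refine ge_of_tendsto' hlim fun k => ?_
    calc dist (g s) (g t) ≤ dist (g s) (f s k) + dist (f s k) (f t k) + dist (f t k) (g t) :=
          dist_triangle4 _ _ _ _
      _ ≤ B / 2 ^ k + (B * (t - s) + B / 2 ^ k) + B / 2 ^ k := by
          rw [dist_comm (g s)]
          exact add_le_add (add_le_add (htail s k) (dist_dyadic_floor_le hB hst k)) (htail t k)
      _ = B * (t - s) + 3 * (B / 2 ^ k) := by ring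
  refine ⟨g, LipschitzWith.of_dist_le_mul fun s t => ?_, ?_, ?_⟩
  · rcases le_total s t with hst | hts
    · rw [dist_comm s, Real.dist_eq, abs_of_nonneg (sub_nonneg.2 hst)]
      exact hlip s t hst
    · rw [dist_comm, Real.dist_eq, abs_of_nonneg (sub_nonneg.2 hts)]
      exact hlip t s hts
  · refine tendsto_nhds_unique (hg 0) (tendsto_const_nhds.congr fun k => ?_)
    simpa [f] using (hcoarse k 0).symm
  · refine tendsto_nhds_unique (hg 1) (tendsto_const_nhds.congr fun k => ?_)
    have hfloor : ⌊(1 : ℝ) * 2 ^ k⌋₊ = 2 ^ k := by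
      rw [one_mul]; exact_mod_cast Nat.floor_natCast (2 ^ k)
    simp only [f, hfloor]
    rw [← hcoarse k 1, mul_one]

end DyadicPath

section UpperBound

theorem LipschitzWith.pathLength_le [PseudoEMetricSpace X] {g : ℝ → X} {K : ℝ≥0}
    (hg : LipschitzWith K g) : pathLength g ≤ K := by
  rw [pathLength_eq_eVariationOn]
  simpa using (hg.lipschitzOnWith (s := univ)).comp_eVariationOn_le (g := id)
    (s := Icc (0 : ℝ) 1) (mapsTo_univ _ _)

theorem lengthMetric_le_of_chainMetricOf_le [MetricSpace X] [CompleteSpace X]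
    {ρ : X → X → ℝ≥0∞} (hrefl : ∀ a, ρ a a = 0) (htri : ∀ a b c, ρ a c ≤ ρ a b + ρ b c)
    (hstab : ∀ a b, chainMetricOf ρ a b ≤ ρ a b) (hd : ∀ a b, edist a b ≤ ρ a b) (p q : X) :
    lengthMetric p q ≤ ρ p q := by
  refine ENNReal.le_of_forall_pos_le_add fun δ hδ hfin => ?_
  have hη : ∀ k : ℕ, 0 < (δ : ℝ≥0∞) * 2⁻¹ ^ (2 * k + 2) := fun k =>
    ENNReal.mul_pos (ENNReal.coe_ne_zero.2 hδ.ne')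
      (pow_ne_zero _ (ENNReal.inv_ne_zero.2 ENNReal.ofNat_ne_top))
  choose mid hmid using fun k a b => exists_approx_midpoint hrefl htri hstab a b (hη k)
  set B : ℝ≥0 := (ρ p q + δ).toNNReal
  have hB : (B : ℝ≥0∞) = ρ p q + δ := ENNReal.coe_toNNReal (by finiteness)
  have hnet : ∀ k j, dist (dyadicNet mid p q k j) (dyadicNet mid p q k (j + 1)) ≤ B / 2 ^ k := by
    intro k j
    have h := (hd _ _).trans (dyadicNet_adjacent_le mid p q hrefl hmid k j)
    rw [← hB, edist_dist, ← ENNReal.ofReal_coe_nnreal, ← ENNReal.ofReal_ofNat 2,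
      ← ENNReal.ofReal_inv_of_pos two_pos, ← ENNReal.ofReal_pow (by norm_num),
      ← ENNReal.ofReal_mul B.coe_nonneg, ENNReal.ofReal_le_ofReal_iff (by positivity)] at h
    simpa [div_eq_mul_inv] using h
  obtain ⟨g, hg, hg0, hg1⟩ := exists_lipschitzWith_of_dyadic (dyadicNet_succ_two_mul mid p q) hnet
  calc lengthMetric p q ≤ pathLength g :=
        iInf₂_le g ⟨continuousWrt_edist_iff.2 hg.continuous.continuousOn, hg0, hg1⟩
    _ ≤ B := hg.pathLength_le
    _ = ρ p q + δ := hB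

end UpperBound

/-- if `(X,d)` is complete and `d_0^n = d_0^{n+1}` for some `n`, then
`d_0^m = d̄` for all `m ≥ n`. -/
theorem iterChainMetric_stabilizes {X : Type*} [MetricSpace X] [CompleteSpace X] (n : ℕ)
    (h : ∀ p q : X, iterChainMetric n p q = iterChainMetric (n + 1) p q) :
    ∀ m ≥ n, ∀ p q : X, iterChainMetric m p q = lengthMetric p q := by
  intro m hm p q
  rw [iterChainMetric_eq_of_le h hm]
  exact le_antisymm (iterChainMetric_le_lengthMetric n p q)
    (lengthMetric_le_of_chainMetricOf_le (iterChainMetric_self n) (iterChainMetric_triangle n)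
      (fun a b => (h a b).ge) (edist_le_iterChainMetric n) p q)
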